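/- arXiv:1610.06000 — 2 statements merged into one kernel-verified Lean document; each statement's English description precedes it below -/
import Mathlib

section
/- If f, g : Ω → {0,1} are jointly monotone, then for any e ∈ E, ∑_{S : e ∈ S} f̂(S) ĝ(S) = p(1-p) P(e ∈ 𝒫_f ∩ 𝒫_g), where 𝒫_f(ω) is the set of bits pivotal for f at ω. -/
open scoped Classical
open Finset

/-- The product (Bernoulli-`p`) measure of a configuration `ω ∈ {0,1}^E`. -/
noncomputable def probCfg {E : Type*} [Fintype E] (p : ℝ) (ω : E → Bool) : ℝ :=
  ∏ e : E, if ω e then p else 1 - p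

/-- Expectation of `f : Ω → ℝ` under the product measure `P_p`. -/
noncomputable def bexpect {E : Type*} [Fintype E] [DecidableEq E]
    (p : ℝ) (f : (E → Bool) → ℝ) : ℝ :=
  ∑ ω : E → Bool, probCfg p ω * f ω

/-- `r_e(ω)`: the basic biased character of the single bit `e`. -/
noncomputable def rad (p : ℝ) {E : Type*} (ω : E → Bool) (e : E) : ℝ :=
  if ω e then Real.sqrt ((1 - p) / p) else -Real.sqrt (p / (1 - p))

/-- `χ_S(ω) = ∏_{e ∈ S} r_e(ω)`. -/
noncomputable def chi {E : Type*} (p : ℝ) (S : Finset E) (ω : E → Bool) : ℝ :=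
  ∏ e ∈ S, rad p ω e

/-- Biased Fourier coefficient `f̂(S) = E[f χ_S]`. -/
noncomputable def fhat {E : Type*} [Fintype E] [DecidableEq E]
    (p : ℝ) (f : (E → Bool) → ℝ) (S : Finset E) : ℝ :=
  bexpect p (fun ω => f ω * chi p S ω)

/-- `σ_e(ω)`: the configuration `ω` with the bit at `e` flipped. -/
def flipBit {E : Type*} [DecidableEq E] (e : E) (ω : E → Bool) : E → Bool :=
  Function.update ω e (!ω e)

/-!
Expanding both Fourier coefficients writes the left side as
`∑_{ω,ω'} f(ω) g(ω') π(ω) π(ω') K(ω,ω')` with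
`K(ω,ω') = ∑_{S ∋ e} χ_S(ω) χ_S(ω') = r_e(ω) r_e(ω') ∏_{a ≠ e} (1 + r_a(ω) r_a(ω'))`.
Bitwise, `π_a(b) π_a(b') (1 + r_a(b) r_a(b')) = [b = b'] π_a(b)`, so the weighted kernel lives on
`ω' ∈ {ω, σ_e ω}`, where it is `± p(1-p)` times the probability of `ω` off `e`. Symmetrising
under `σ_e` gives `p(1-p) E[(f - f ∘ σ_e)(g - g ∘ σ_e)]` for arbitrary real `f, g`; for
`{0,1}`-valued jointly monotone `f, g` the integrand is the indicator that `e` is pivotal for both.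
-/

noncomputable def bitProb (p : ℝ) (b : Bool) : ℝ :=
  if b then p else 1 - p

noncomputable def probCfgOff {E : Type*} [Fintype E] [DecidableEq E]
    (p : ℝ) (e : E) (ω : E → Bool) : ℝ :=
  ∏ a ∈ univ.erase e, bitProb p (ω a)

theorem Finset.sum_filter_mem_prod {α R : Type*} [Fintype α] [DecidableEq α] [CommSemiring R]
    (x : α → R) (e : α) :
    ∑ S ∈ univ.filter (fun S : Finset α => e ∈ S), ∏ a ∈ S, x a
      = x e * ∏ a ∈ univ.erase e, (1 + x a) := by
  have he : e ∉ univ.erase e := notMem_erase e univ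
  have huniv : (univ : Finset (Finset α)) = (insert e (univ.erase e)).powerset := by
    rw [insert_erase (mem_univ e), powerset_univ]
  have hnotMem : ∀ T ∈ (univ.erase e).powerset, e ∉ T := fun T hT h => he (mem_powerset.1 hT h)
  rw [sum_filter, huniv, sum_powerset_insert he, prod_one_add, mul_sum,
    sum_eq_zero fun T hT => if_neg (hnotMem T hT), zero_add]
  exact sum_congr rfl fun T hT => by
    rw [if_pos (mem_insert_self e T), prod_insert (hnotMem T hT)]

section FlipBit

variable {E : Type*} [DecidableEq E]

@[simp]
lemma flipBit_self (e : E) (ω : E → Bool) : flipBit e ω e = !ω e :=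
  Function.update_self _ _ _

lemma flipBit_of_ne {a e : E} (h : a ≠ e) (ω : E → Bool) : flipBit e ω a = ω a :=
  Function.update_of_ne h _ _

lemma flipBit_involutive (e : E) : Function.Involutive (flipBit e) := fun ω => by
  funext a
  by_cases ha : a = e
  · subst ha; simp
  · rw [flipBit_of_ne ha, flipBit_of_ne ha]

lemma flipBit_ne_self (e : E) (ω : E → Bool) : flipBit e ω ≠ ω := fun h => by
  simpa using congrFun h e

lemma eq_or_eq_flipBit_of_forall_ne {e : E} {ω ω' : E → Bool} (h : ∀ a ≠ e, ω' a = ω a) :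
    ω' = ω ∨ ω' = flipBit e ω := by
  by_cases he : ω' e = ω e
  · left; funext a
    by_cases ha : a = e
    · subst ha; exact he
    · exact h a ha
  · right; funext a
    by_cases ha : a = e
    · subst ha; rw [flipBit_self]; exact Bool.eq_not_iff.2 he
    · rw [flipBit_of_ne ha]; exact h a ha

end FlipBit

section BitLemmas

variable {E : Type*} {p : ℝ}

lemma bitProb_mul_rad (hp0 : 0 < p) (hp1 : p < 1) (ω : E → Bool) (a : E) :
    bitProb p (ω a) * rad p ω a = if ω a then √(p * (1 - p)) else -√(p * (1 - p)) := by
  have hq : 0 < 1 - p := by linarith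
  unfold bitProb rad
  cases ω a
  · simp only [Bool.false_eq_true, if_false, mul_neg, neg_inj]
    rw [← Real.sqrt_sq hq.le, ← Real.sqrt_mul (sq_nonneg _), Real.sqrt_sq hq.le]
    congr 1; field_simp
  · simp only [if_true]
    rw [← Real.sqrt_sq hp0.le, ← Real.sqrt_mul (sq_nonneg _), Real.sqrt_sq hp0.le]
    congr 1; field_simp

lemma bitProb_mul_bitProb_mul_rad_mul_rad (hp0 : 0 < p) (hp1 : p < 1) (ω ω' : E → Bool) (a : E) :
    bitProb p (ω a) * bitProb p (ω' a) * (rad p ω a * rad p ω' a)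
      = if ω a = ω' a then p * (1 - p) else -(p * (1 - p)) := by
  have hsq : √(p * (1 - p)) * √(p * (1 - p)) = p * (1 - p) :=
    Real.mul_self_sqrt (mul_nonneg hp0.le (by linarith))
  rw [mul_mul_mul_comm, bitProb_mul_rad hp0 hp1, bitProb_mul_rad hp0 hp1]
  cases ω a <;> cases ω' a <;> simp [hsq]

lemma bitProb_mul_bitProb_mul_one_add_rad_mul_rad (hp0 : 0 < p) (hp1 : p < 1)
    (ω ω' : E → Bool) (a : E) :
    bitProb p (ω a) * bitProb p (ω' a) * (1 + rad p ω a * rad p ω' a)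
      = if ω a = ω' a then bitProb p (ω a) else 0 := by
  rw [mul_one_add, bitProb_mul_bitProb_mul_rad_mul_rad hp0 hp1]
  unfold bitProb
  cases ω a <;> cases ω' a <;> simp
  all_goals ring

end BitLemmas

section Kernel

variable {E : Type*} [Fintype E] [DecidableEq E] {p : ℝ}

lemma probCfg_eq_bitProb_mul_probCfgOff (e : E) (ω : E → Bool) :
    probCfg p ω = bitProb p (ω e) * probCfgOff p e ω :=
  (mul_prod_erase univ (fun a => bitProb p (ω a)) (mem_univ e)).symm

lemma probCfgOff_flipBit (e : E) (ω : E → Bool) :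
    probCfgOff p e (flipBit e ω) = probCfgOff p e ω :=
  prod_congr rfl fun a ha => by rw [flipBit_of_ne (ne_of_mem_erase ha)]

lemma probCfg_add_probCfg_flipBit (e : E) (ω : E → Bool) :
    probCfg p ω + probCfg p (flipBit e ω) = probCfgOff p e ω := by
  rw [probCfg_eq_bitProb_mul_probCfgOff e, probCfg_eq_bitProb_mul_probCfgOff e,
    probCfgOff_flipBit, flipBit_self, ← add_mul]
  unfold bitProb
  cases ω e <;> simp

lemma probCfg_mul_probCfg_mul_sum_chi_mul_chi (hp0 : 0 < p) (hp1 : p < 1) (e : E)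
    (ω ω' : E → Bool) :
    probCfg p ω * probCfg p ω' *
        ∑ S ∈ univ.filter (fun S : Finset E => e ∈ S), chi p S ω * chi p S ω'
      = (if ω e = ω' e then p * (1 - p) else -(p * (1 - p))) *
          ∏ a ∈ univ.erase e, if ω a = ω' a then bitProb p (ω a) else 0 := by
  simp_rw [chi, ← prod_mul_distrib]
  rw [sum_filter_mem_prod, probCfg_eq_bitProb_mul_probCfgOff e ω,
    probCfg_eq_bitProb_mul_probCfgOff e ω', probCfgOff, probCfgOff,
    ← bitProb_mul_bitProb_mul_rad_mul_rad hp0 hp1,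
    ← prod_congr rfl fun a _ => bitProb_mul_bitProb_mul_one_add_rad_mul_rad hp0 hp1 ω ω' a,
    prod_mul_distrib, prod_mul_distrib]
  ring

-- Only `ω' = ω` and `ω' = σ_e ω` survive: any other `ω'` differs from `ω` at some `a ≠ e`.
lemma sum_mul_kernel (e : E) (ω : E → Bool) (c : ℝ) (G : (E → Bool) → ℝ) :
    ∑ ω', G ω' * ((if ω e = ω' e then c else -c) *
        ∏ a ∈ univ.erase e, if ω a = ω' a then bitProb p (ω a) else 0)
      = c * probCfgOff p e ω * (G ω - G (flipBit e ω)) := by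
  rw [Fintype.sum_eq_add ω (flipBit e ω) (flipBit_ne_self e ω).symm]
  · have hprod : ∏ a ∈ univ.erase e, (if ω a = flipBit e ω a then bitProb p (ω a) else 0)
        = probCfgOff p e ω :=
      prod_congr rfl fun a ha => if_pos (flipBit_of_ne (ne_of_mem_erase ha) ω).symm
    rw [hprod, flipBit_self, if_neg (Bool.not_ne_self _).symm, if_pos rfl, probCfgOff]
    simp only [if_true]
    ring
  · rintro ω' ⟨hω, hσω⟩
    obtain ⟨a, ha, hne⟩ : ∃ a ≠ e, ω' a ≠ ω a := by
      by_contra! h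
      exact (eq_or_eq_flipBit_of_forall_ne h).elim hω hσω
    rw [prod_eq_zero (mem_erase.2 ⟨ha, mem_univ a⟩) (if_neg (Ne.symm hne)), mul_zero, mul_zero]

lemma sum_probCfgOff_mul_sub_flipBit (e : E) (f g : (E → Bool) → ℝ) :
    ∑ ω, probCfgOff p e ω * (f ω * (g ω - g (flipBit e ω)))
      = bexpect p (fun ω => (f ω - f (flipBit e ω)) * (g ω - g (flipBit e ω))) := by
  have hreindex := Equiv.sum_comp ((flipBit_involutive e).toPerm _)
    (fun ω => probCfg p ω * (f (flipBit e ω) * (g (flipBit e ω) - g ω)))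
  simp only [Function.Involutive.coe_toPerm, flipBit_involutive e _] at hreindex
  simp_rw [bexpect, ← probCfg_add_probCfg_flipBit e, add_mul, sum_add_distrib, hreindex,
    ← sum_add_distrib]
  exact sum_congr rfl fun ω _ => by ring

end Kernel

theorem sum_filter_mem_fhat_mul_fhat {E : Type*} [Fintype E] [DecidableEq E] {p : ℝ}
    (hp0 : 0 < p) (hp1 : p < 1) (f g : (E → Bool) → ℝ) (e : E) :
    ∑ S ∈ univ.filter (fun S : Finset E => e ∈ S), fhat p f S * fhat p g S
      = p * (1 - p) *
        bexpect p (fun ω => (f ω - f (flipBit e ω)) * (g ω - g (flipBit e ω))) := by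
  have hexpand : ∑ S ∈ univ.filter (fun S : Finset E => e ∈ S), fhat p f S * fhat p g S
      = ∑ ω, f ω * ∑ ω', g ω' * (probCfg p ω * probCfg p ω' *
          ∑ S ∈ univ.filter (fun S : Finset E => e ∈ S), chi p S ω * chi p S ω') := by
    simp_rw [fhat, bexpect, sum_mul_sum, mul_sum]
    rw [sum_comm]
    refine sum_congr rfl fun ω _ => ?_
    rw [sum_comm]
    exact sum_congr rfl fun ω' _ => sum_congr rfl fun S _ => by ring
  simp_rw [hexpand, probCfg_mul_probCfg_mul_sum_chi_mul_chi hp0 hp1,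
    sum_mul_kernel e _ (p * (1 - p)) g, ← sum_probCfgOff_mul_sub_flipBit, mul_sum]
  exact sum_congr rfl fun ω _ => by ring

lemma ite_ne_and_ne_eq_sub_mul_sub {x x' y y' : ℝ} (hx : x = 0 ∨ x = 1) (hx' : x' = 0 ∨ x' = 1)
    (hy : y = 0 ∨ y = 1) (hy' : y' = 0 ∨ y' = 1) (h : 0 ≤ (x - x') * (y - y')) :
    (if x' ≠ x ∧ y' ≠ y then 1 else 0) = (x - x') * (y - y') := by
  rcases hx with rfl | rfl <;> rcases hx' with rfl | rfl <;> rcases hy with rfl | rfl <;>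
    rcases hy' with rfl | rfl <;> revert h <;> norm_num

/-- If `f, g : Ω → {0,1}` are jointly monotone, then for any bit `e`,
`∑_{S : e ∈ S} f̂(S) ĝ(S) = p(1-p) P(e ∈ 𝒫_f ∩ 𝒫_g)`,
where `𝒫_f(ω)` is the set of bits pivotal for `f` at `ω`. -/
theorem sum_fourier_pivotal {E : Type*} [Fintype E] [DecidableEq E] {p : ℝ}
    (hp0 : 0 < p) (hp1 : p < 1) (f g : (E → Bool) → ℝ)
    (hf01 : ∀ ω, f ω = 0 ∨ f ω = 1) (hg01 : ∀ ω, g ω = 0 ∨ g ω = 1)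
    (hmono : ∀ (e : E) (ω : E → Bool),
      0 ≤ (f ω - f (flipBit e ω)) * (g ω - g (flipBit e ω)))
    (e : E) :
    ∑ S ∈ Finset.univ.filter (fun S : Finset E => e ∈ S), fhat p f S * fhat p g S
      = p * (1 - p) *
        bexpect p (fun ω =>
          if f (flipBit e ω) ≠ f ω ∧ g (flipBit e ω) ≠ g ω then 1 else 0) := by
  rw [sum_filter_mem_fhat_mul_fhat hp0 hp1]
  congr 2
  funext ω
  exact (ite_ne_and_ne_eq_sub_mul_sub (hf01 ω) (hf01 _) (hg01 ω) (hg01 _) (hmono e ω)).symm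
end

section
/- FKG comparison of noise correlations: Suppose f, g : Ω → ℝ are square-integrable and both f and g - f are increasing. Then for any ε ∈ [0,1], E[g(ω)g(ω_ε)] - E[g(ω)]² ≥ E[f(ω)f(ω_ε)] - E[f(ω)]². -/
open scoped Classical
open Finset

/-- Transition kernel of ε-noise: each bit is kept with probability `1-ε`, and
rerandomized to a fresh Bernoulli(`p`) bit with probability `ε`, independently. -/
noncomputable def noiseKernel {E : Type*} [Fintype E] (p ε : ℝ) (ω ω' : E → Bool) : ℝ :=
  ∏ e : E, ((1 - ε) * (if ω' e = ω e then 1 else 0) + ε * (if ω' e then p else 1 - p))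

/-- `E[f(ω) g(ω_ε)]`, averaging over `ω ∼ P_p` and the independent noise. -/
noncomputable def noisedExpect {E : Type*} [Fintype E] [DecidableEq E]
    (p ε : ℝ) (f g : (E → Bool) → ℝ) : ℝ :=
  ∑ ω : E → Bool, ∑ ω' : E → Bool, probCfg p ω * noiseKernel p ε ω ω' * (f ω * g ω')

/-!
Write `g = f + h` with `f` and `h` increasing. The noise covariance
`Cov(u, v) = E[u(ω) v(ω_ε)] - E[u] E[v]` is bilinear, so
`Cov(g, g) - Cov(f, f) = Cov(f, h) + Cov(h, f) + Cov(h, h)`, and each term is nonnegative by the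
FKG inequality on the lattice `Ω × Ω`: the law of `(ω, ω_ε)` is a product over the bits of a
`2 × 2` weight that is log-supermodular, since keeping a bit only adds mass on the diagonal.
-/

/-- The law of a single pair `(ω e, ω_ε e)`. -/
noncomputable def bitPairLaw (p ε : ℝ) (x y : Bool) : ℝ :=
  (if x then p else 1 - p) * ((1 - ε) * (if y = x then 1 else 0) + ε * (if y then p else 1 - p))

/-- The law of `(ω, ω_ε)`. -/
noncomputable def noisePairLaw {E : Type*} [Fintype E] (p ε : ℝ)
    (a : (E → Bool) × (E → Bool)) : ℝ :=
  probCfg p a.1 * noiseKernel p ε a.1 a.2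

/-- Mathlib's `fkg` for monotone functions of any sign: shift them by their values at `⊥`. -/
theorem fkg_of_orderBot {α β : Type*} [DistribLattice α] [OrderBot α] [Fintype α]
    [CommRing β] [LinearOrder β] [IsStrictOrderedRing β] {μ f g : α → β}
    (hμ₀ : 0 ≤ μ) (hf : Monotone f) (hg : Monotone g)
    (hμ : ∀ a b, μ a * μ b ≤ μ (a ⊓ b) * μ (a ⊔ b)) :
    (∑ a, μ a * f a) * ∑ a, μ a * g a ≤ (∑ a, μ a) * ∑ a, μ a * (f a * g a) := by
  have key := fkg (fun a => f a - f ⊥) (fun a => g a - g ⊥) μ hμ₀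
    (fun a => sub_nonneg.2 (hf bot_le)) (fun a => sub_nonneg.2 (hg bot_le))
    (fun _ _ h => sub_le_sub_right (hf h) _) (fun _ _ h => sub_le_sub_right (hg h) _) hμ
  simp only [mul_sub, sub_mul, sum_sub_distrib, mul_left_comm (μ _) (f ⊥),
    ← mul_assoc (μ _) (f _) (g ⊥), ← mul_sum, ← sum_mul] at key
  linear_combination key

theorem Fintype.sum_bool_pi_prod {ι R : Type*} [Fintype ι] [DecidableEq ι] [CommSemiring R]
    (F : ι → Bool → R) :
    ∑ ω : ι → Bool, ∏ i, F i (ω i) = ∏ i, (F i true + F i false) := by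
  simp only [← Fintype.sum_bool, Fintype.prod_sum]

section BitPairLaw

variable {p ε : ℝ}

theorem bitPairLaw_nonneg (hp₀ : 0 ≤ p) (hp₁ : p ≤ 1) (hε₀ : 0 ≤ ε) (hε₁ : ε ≤ 1) (x y : Bool) :
    0 ≤ bitPairLaw p ε x y := by
  have := sub_nonneg.2 hp₁
  have := sub_nonneg.2 hε₁
  cases x <;> cases y <;> simp [bitPairLaw] <;> positivity

theorem bitPairLaw_mul_le_inf_mul_sup (hp₀ : 0 ≤ p) (hp₁ : p ≤ 1) (hε₁ : ε ≤ 1)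
    (x y x' y' : Bool) :
    bitPairLaw p ε x y * bitPairLaw p ε x' y' ≤
      bitPairLaw p ε (x ⊓ x') (y ⊓ y') * bitPairLaw p ε (x ⊔ x') (y ⊔ y') := by
  have h : 0 ≤ p * (1 - p) * (1 - ε) := by
    have := sub_nonneg.2 hp₁
    have := sub_nonneg.2 hε₁
    positivity
  cases x <;> cases y <;> cases x' <;> cases y' <;> simp [bitPairLaw] <;> nlinarith [h]

theorem bitPairLaw_marginal_fst (x : Bool) :
    bitPairLaw p ε x true + bitPairLaw p ε x false = if x then p else 1 - p := by
  cases x <;> simp [bitPairLaw] <;> ring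

theorem bitPairLaw_marginal_snd (y : Bool) :
    bitPairLaw p ε true y + bitPairLaw p ε false y = if y then p else 1 - p := by
  cases y <;> simp [bitPairLaw] <;> ring

end BitPairLaw

section NoisePairLaw

variable {E : Type*} [Fintype E] {p ε : ℝ}

theorem noisePairLaw_eq_prod (a : (E → Bool) × (E → Bool)) :
    noisePairLaw p ε a = ∏ e, bitPairLaw p ε (a.1 e) (a.2 e) := by
  rw [noisePairLaw, probCfg, noiseKernel, ← prod_mul_distrib]
  rfl

theorem noisePairLaw_nonneg (hp₀ : 0 ≤ p) (hp₁ : p ≤ 1) (hε₀ : 0 ≤ ε) (hε₁ : ε ≤ 1) :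
    0 ≤ (noisePairLaw p ε : (E → Bool) × (E → Bool) → ℝ) := fun a => by
  rw [Pi.zero_apply, noisePairLaw_eq_prod]
  exact prod_nonneg fun e _ => bitPairLaw_nonneg hp₀ hp₁ hε₀ hε₁ _ _

theorem noisePairLaw_mul_le_inf_mul_sup (hp₀ : 0 ≤ p) (hp₁ : p ≤ 1) (hε₀ : 0 ≤ ε) (hε₁ : ε ≤ 1)
    (a b : (E → Bool) × (E → Bool)) :
    noisePairLaw p ε a * noisePairLaw p ε b ≤
      noisePairLaw p ε (a ⊓ b) * noisePairLaw p ε (a ⊔ b) := by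
  simp only [noisePairLaw_eq_prod, ← prod_mul_distrib]
  exact prod_le_prod
    (fun e _ => mul_nonneg (bitPairLaw_nonneg hp₀ hp₁ hε₀ hε₁ _ _)
      (bitPairLaw_nonneg hp₀ hp₁ hε₀ hε₁ _ _))
    (fun e _ => bitPairLaw_mul_le_inf_mul_sup hp₀ hp₁ hε₁ _ _ _ _)

variable [DecidableEq E]

variable (p) in
theorem sum_probCfg : ∑ ω : E → Bool, probCfg p ω = 1 := by
  simp only [probCfg]
  rw [Fintype.sum_bool_pi_prod (fun _ x => if x then p else 1 - p)]
  simp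

theorem noisePairLaw_marginal_fst (ω : E → Bool) :
    ∑ ω' : E → Bool, noisePairLaw p ε (ω, ω') = probCfg p ω := by
  simp only [noisePairLaw_eq_prod]
  rw [Fintype.sum_bool_pi_prod (fun e y => bitPairLaw p ε (ω e) y)]
  simp only [bitPairLaw_marginal_fst, probCfg]

theorem noisePairLaw_marginal_snd (ω' : E → Bool) :
    ∑ ω : E → Bool, noisePairLaw p ε (ω, ω') = probCfg p ω' := by
  simp only [noisePairLaw_eq_prod]
  rw [Fintype.sum_bool_pi_prod (fun e x => bitPairLaw p ε x (ω' e))]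
  simp only [bitPairLaw_marginal_snd, probCfg]

theorem sum_noisePairLaw : ∑ a : (E → Bool) × (E → Bool), noisePairLaw p ε a = 1 := by
  rw [Fintype.sum_prod_type]
  simp only [noisePairLaw_marginal_fst, sum_probCfg]

theorem sum_noisePairLaw_mul_fst (f : (E → Bool) → ℝ) :
    ∑ a, noisePairLaw p ε a * f a.1 = bexpect p f := by
  simp only [Fintype.sum_prod_type, ← sum_mul, noisePairLaw_marginal_fst, bexpect]

theorem sum_noisePairLaw_mul_snd (f : (E → Bool) → ℝ) :
    ∑ a, noisePairLaw p ε a * f a.2 = bexpect p f := by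
  simp only [Fintype.sum_prod_type_right, ← sum_mul, noisePairLaw_marginal_snd, bexpect]

theorem sum_noisePairLaw_mul_mul (f h : (E → Bool) → ℝ) :
    ∑ a, noisePairLaw p ε a * (f a.1 * h a.2) = noisedExpect p ε f h := by
  rw [Fintype.sum_prod_type]
  rfl

theorem bexpect_mul_bexpect_le_noisedExpect (hp₀ : 0 ≤ p) (hp₁ : p ≤ 1) (hε₀ : 0 ≤ ε)
    (hε₁ : ε ≤ 1) {f h : (E → Bool) → ℝ} (hf : Monotone f) (hh : Monotone h) :
    bexpect p f * bexpect p h ≤ noisedExpect p ε f h := by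
  have := fkg_of_orderBot (noisePairLaw_nonneg hp₀ hp₁ hε₀ hε₁)
    (hf.comp monotone_fst) (hh.comp monotone_snd)
    (noisePairLaw_mul_le_inf_mul_sup hp₀ hp₁ hε₀ hε₁)
  simpa only [Function.comp_apply, sum_noisePairLaw_mul_fst, sum_noisePairLaw_mul_snd,
    sum_noisePairLaw_mul_mul, sum_noisePairLaw, one_mul] using this

theorem bexpect_add (f h : (E → Bool) → ℝ) :
    bexpect p (f + h) = bexpect p f + bexpect p h := by
  simp only [bexpect, Pi.add_apply, mul_add, sum_add_distrib]

theorem noisedExpect_add_left (f h k : (E → Bool) → ℝ) :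
    noisedExpect p ε (f + h) k = noisedExpect p ε f k + noisedExpect p ε h k := by
  simp only [noisedExpect, Pi.add_apply, add_mul, mul_add, sum_add_distrib]

theorem noisedExpect_add_right (f h k : (E → Bool) → ℝ) :
    noisedExpect p ε f (h + k) = noisedExpect p ε f h + noisedExpect p ε f k := by
  simp only [noisedExpect, Pi.add_apply, mul_add, sum_add_distrib]

end NoisePairLaw

theorem monotone_of_forall_eq_true_imp {E β : Type*} [Preorder β] {f : (E → Bool) → β}
    (hf : ∀ ω ω' : E → Bool, (∀ e, ω e = true → ω' e = true) → f ω ≤ f ω') : Monotone f :=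
  fun ω ω' hle => hf ω ω' fun e => Bool.le_iff_imp.1 (hle e)

/-- FKG comparison of noise correlations: if `f` and `g - f` are increasing, then
`E[g(ω)g(ω_ε)] - E[g(ω)]² ≥ E[f(ω)f(ω_ε)] - E[f(ω)]²`. -/
theorem fkg_noise_comparison {E : Type*} [Fintype E] [DecidableEq E] {p ε : ℝ}
    (hp0 : 0 < p) (hp1 : p < 1) (hε0 : 0 ≤ ε) (hε1 : ε ≤ 1)
    (f g : (E → Bool) → ℝ)
    (hf : ∀ ω ω' : E → Bool, (∀ e, ω e = true → ω' e = true) → f ω ≤ f ω')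
    (hgf : ∀ ω ω' : E → Bool, (∀ e, ω e = true → ω' e = true) →
      g ω - f ω ≤ g ω' - f ω') :
    noisedExpect p ε g g - (bexpect p g) ^ 2
      ≥ noisedExpect p ε f f - (bexpect p f) ^ 2 := by
  have hf : Monotone f := monotone_of_forall_eq_true_imp hf
  obtain ⟨h, hh, rfl⟩ : ∃ h, Monotone h ∧ g = f + h :=
    ⟨g - f, monotone_of_forall_eq_true_imp hgf, (add_sub_cancel f g).symm⟩
  have harris {u v : (E → Bool) → ℝ} (hu : Monotone u) (hv : Monotone v) :=
    bexpect_mul_bexpect_le_noisedExpect hp0.le hp1.le hε0 hε1 hu hv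
  rw [bexpect_add, noisedExpect_add_left, noisedExpect_add_right, noisedExpect_add_right]
  nlinarith [harris hf hh, harris hh hf, harris hh hh]
end
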